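/- For every positive integer l, let C = A_{2l+1} ∪ (2^{2l+1} − 2 + B_{2l+1}) and D = B_{2l+1} ∪ (2^{2l+1} − 2 + A_{2l+1}). Then C ∪ D = [0, 2^{2l+2} − 3], C ∩ D = {2^{2l+1} − 2, 2^{2l+1} − 1}, 0 ∈ C, and R_C(n) = R_D(n) for every nonnegative integer n. -/

import Mathlib

open Set

/-- R S n: number of pairs (s,s') with s,s' ∈ S, s < s', s+s' = n. -/
noncomputable def R (S : Set ℕ) (n : ℕ) : ℕ :=
  {p : ℕ × ℕ | p.1 ∈ S ∧ p.2 ∈ S ∧ p.1 < p.2 ∧ p.1 + p.2 = n}.ncard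

/-- Thue–Morse set: nonnegative integers with an even number of binary 1's. -/
def A : Set ℕ := {n | Even ((Nat.digits 2 n).count 1)}

def B : Set ℕ := Aᶜ

def Al (k : ℕ) : Set ℕ := A ∩ Set.Icc 0 (2 ^ k - 1)

def Bl (k : ℕ) : Set ℕ := B ∩ Set.Icc 0 (2 ^ k - 1)

/-!
Put `k = 2l + 1`. The map `glue k`, which fixes `[0, 2^k)` and lowers `[2^k, 2^(k+1))` by `2`,
carries `A_{k+1}` onto `C` and `B_{k+1}` onto `D`; since `k` is odd it is injective on each, and
its only collisions, `2^k - 2 ↦ 2^k - 2 ↤ 2^k` and `2^k - 1 ↦ 2^k - 1 ↤ 2^k + 1`, give `C ∩ D`.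
So representations of `n` by `C` correspond to pairs `u ≠ v` in `A_{k+1}` with
`glue u + glue v = n`. Exchanging the lowest binary digit in which `u` and `v` differ flips the
Thue–Morse parity of both and keeps `u + v`; for `u, v` of equal parity that digit lies below `k`,
so each entry stays in its half and `glue u + glue v` is kept too. This involution matches the
pairs from `A_{k+1}` with those from `B_{k+1}`.
-/

lemma zero_mem_A : 0 ∈ A := by simp [A]

lemma mem_A_iff_div_two (n : ℕ) : n ∈ A ↔ (n / 2 ∈ A ↔ n % 2 = 0) := by
  rcases Nat.eq_zero_or_pos n with rfl | hn
  · simp [zero_mem_A]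
  · have h := Nat.mod_two_eq_zero_or_one n
    simp only [A, mem_ofPred_eq, Nat.digits_def' one_lt_two hn, List.count_cons]
    rcases h with h | h <;> simp [h, Nat.even_add_one]

lemma two_mul_add_mem_A_iff (a : ℕ) {r : ℕ} (hr : r < 2) :
    2 * a + r ∈ A ↔ (a ∈ A ↔ r = 0) := by
  rw [mem_A_iff_div_two]
  have hdiv : (2 * a + r) / 2 = a := by omega
  have hmod : (2 * a + r) % 2 = r := by omega
  rw [hdiv, hmod]

lemma two_pow_add_mem_A_iff {k t : ℕ} (ht : t < 2 ^ k) : 2 ^ k + t ∈ A ↔ t ∉ A := by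
  induction k generalizing t with
  | zero =>
    obtain rfl : t = 0 := by simpa using ht
    simpa [zero_mem_A] using (two_mul_add_mem_A_iff 0 one_lt_two)
  | succ k ih =>
    have ht' : t / 2 < 2 ^ k := by rw [pow_succ] at ht; omega
    have h := two_mul_add_mem_A_iff (2 ^ k + t / 2) (Nat.mod_lt t two_pos)
    rw [show 2 * (2 ^ k + t / 2) + t % 2 = 2 ^ (k + 1) + t by rw [pow_succ]; omega,
      ih ht'] at h
    rw [h, mem_A_iff_div_two t]
    tauto

lemma two_pow_sub_one_mem_A_iff (k : ℕ) : 2 ^ k - 1 ∈ A ↔ Even k := by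
  induction k with
  | zero => simpa using zero_mem_A
  | succ k ih =>
    have h := two_mul_add_mem_A_iff (2 ^ k - 1) one_lt_two
    rw [show 2 * (2 ^ k - 1) + 1 = 2 ^ (k + 1) - 1 by
      rw [pow_succ]; have := Nat.one_le_two_pow (n := k); omega, ih] at h
    rw [h, Nat.even_add_one]
    simp

lemma two_pow_succ_sub_two_mem_A_iff (k : ℕ) : 2 ^ (k + 1) - 2 ∈ A ↔ Even k := by
  have h := two_mul_add_mem_A_iff (2 ^ k - 1) two_pos
  rw [show 2 * (2 ^ k - 1) + 0 = 2 ^ (k + 1) - 2 by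
    rw [pow_succ]; have := Nat.one_le_two_pow (n := k); omega,
    two_pow_sub_one_mem_A_iff] at h
  simpa using h

lemma two_pow_notMem_A (k : ℕ) : 2 ^ k ∉ A := by
  simpa [zero_mem_A] using two_pow_add_mem_A_iff (t := 0) (Nat.two_pow_pos k)

lemma two_pow_add_one_mem_A {k : ℕ} (hk : 1 ≤ k) : 2 ^ k + 1 ∈ A := by
  have h2 : 2 ≤ 2 ^ k := Nat.le_self_pow (by omega) 2
  rw [two_pow_add_mem_A_iff (by omega), mem_A_iff_div_two]
  simp [zero_mem_A]

lemma mod_two_pow_ne_of_mem_A_iff {k u v : ℕ} (hu : u < 2 ^ (k + 1)) (hv : v < 2 ^ (k + 1))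
    (huv : u ≠ v) (hA : u ∈ A ↔ v ∈ A) : u % 2 ^ k ≠ v % 2 ^ k := by
  intro hmod
  have hdiv : ∀ x < 2 ^ (k + 1), x / 2 ^ k = 0 ∨ x / 2 ^ k = 1 := fun x hx => by
    have : x / 2 ^ k < 2 := (Nat.div_lt_iff_lt_mul (Nat.two_pow_pos k)).2 (by rwa [← pow_succ'])
    exact Nat.le_one_iff_eq_zero_or_eq_one.1 (Nat.lt_succ_iff.1 this)
  have hr := Nat.mod_lt u (Nat.two_pow_pos k)
  have hr' := Nat.mod_lt v (Nat.two_pow_pos k)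
  have hu' := Nat.div_add_mod u (2 ^ k)
  have hv' := Nat.div_add_mod v (2 ^ k)
  rcases hdiv u hu with hq | hq <;> rcases hdiv v hv with hq' | hq' <;>
    rw [hq] at hu' <;> rw [hq'] at hv'
  · omega
  · obtain rfl : v = 2 ^ k + u := by omega
    rw [two_pow_add_mem_A_iff (by omega)] at hA
    tauto
  · obtain rfl : u = 2 ^ k + v := by omega
    rw [two_pow_add_mem_A_iff (by omega)] at hA
    tauto
  · omega

/-- Exchanges the lowest binary digit in which `u` and `v` differ. -/
def swapLowBit (u v : ℕ) : ℕ × ℕ :=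
  if u = v then (u, v)
  else if u % 2 = v % 2 then
    (2 * (swapLowBit (u / 2) (v / 2)).1 + u % 2, 2 * (swapLowBit (u / 2) (v / 2)).2 + v % 2)
  else (2 * (u / 2) + v % 2, 2 * (v / 2) + u % 2)
termination_by u + v
decreasing_by omega

lemma swapLowBit_self (u : ℕ) : swapLowBit u u = (u, u) := by
  rw [swapLowBit, if_pos rfl]

lemma swapLowBit_of_mod_eq {u v : ℕ} (huv : u ≠ v) (h : u % 2 = v % 2) :
    swapLowBit u v = (2 * (swapLowBit (u / 2) (v / 2)).1 + u % 2,
      2 * (swapLowBit (u / 2) (v / 2)).2 + v % 2) := by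
  rw [swapLowBit, if_neg huv, if_pos h]

lemma swapLowBit_of_mod_ne {u v : ℕ} (h : u % 2 ≠ v % 2) :
    swapLowBit u v = (2 * (u / 2) + v % 2, 2 * (v / 2) + u % 2) := by
  rw [swapLowBit, if_neg (by rintro rfl; exact h rfl), if_neg h]

lemma swapLowBit_add (u v : ℕ) : (swapLowBit u v).1 + (swapLowBit u v).2 = u + v := by
  induction u, v using swapLowBit.induct with
  | case1 u => rw [swapLowBit_self]
  | case2 u v huv h ih => rw [swapLowBit_of_mod_eq huv h]; omega
  | case3 u v huv h => rw [swapLowBit_of_mod_ne h]; omega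

lemma swapLowBit_swapLowBit {u v : ℕ} (huv : u ≠ v) :
    swapLowBit (swapLowBit u v).1 (swapLowBit u v).2 = (u, v) := by
  induction u, v using swapLowBit.induct with
  | case1 u => exact absurd rfl huv
  | case2 u v huv h ih =>
    have ih := ih (by omega)
    have hne : (swapLowBit (u / 2) (v / 2)).1 ≠ (swapLowBit (u / 2) (v / 2)).2 := by
      intro heq
      rw [← heq, swapLowBit_self, Prod.mk.injEq] at ih
      omega
    rw [swapLowBit_of_mod_eq huv h, swapLowBit_of_mod_eq (by omega) (by omega)]
    simp only [Nat.mul_add_div two_pos, Nat.mul_add_mod, Nat.mod_mod,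
      Nat.mod_div_self, add_zero, ih, Prod.mk.injEq]
    omega
  | case3 u v huv h =>
    rw [swapLowBit_of_mod_ne h, swapLowBit_of_mod_ne (by omega), Prod.mk.injEq]
    omega

lemma swapLowBit_fst_ne_snd {u v : ℕ} (huv : u ≠ v) : (swapLowBit u v).1 ≠ (swapLowBit u v).2 := by
  intro heq
  have h := swapLowBit_swapLowBit huv
  rw [heq, swapLowBit_self, Prod.mk.injEq] at h
  exact huv (h.1.symm.trans h.2)

lemma swapLowBit_mem_A_iff {u v : ℕ} (huv : u ≠ v) :
    ((swapLowBit u v).1 ∈ A ↔ u ∉ A) ∧ ((swapLowBit u v).2 ∈ A ↔ v ∉ A) := by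
  induction u, v using swapLowBit.induct with
  | case1 u => exact absurd rfl huv
  | case2 u v huv h ih =>
    obtain ⟨ih₁, ih₂⟩ := ih (by omega)
    rw [swapLowBit_of_mod_eq huv h, two_mul_add_mem_A_iff _ (Nat.mod_lt u two_pos),
      two_mul_add_mem_A_iff _ (Nat.mod_lt v two_pos), mem_A_iff_div_two u, mem_A_iff_div_two v]
    tauto
  | case3 u v huv h =>
    have hbit : v % 2 = 0 ↔ ¬u % 2 = 0 := by omega
    rw [swapLowBit_of_mod_ne h, two_mul_add_mem_A_iff _ (Nat.mod_lt v two_pos),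
      two_mul_add_mem_A_iff _ (Nat.mod_lt u two_pos), mem_A_iff_div_two u, mem_A_iff_div_two v]
    tauto

lemma two_mul_add_div_two_pow_succ (a s : ℕ) {r : ℕ} (hr : r < 2) :
    (2 * a + r) / 2 ^ (s + 1) = a / 2 ^ s := by
  rw [pow_succ', ← Nat.div_div_eq_div_mul, Nat.mul_add_div two_pos, Nat.div_eq_of_lt hr, add_zero]

lemma swapLowBit_div_two_pow {u v t : ℕ} (h : u % 2 ^ t ≠ v % 2 ^ t) :
    (swapLowBit u v).1 / 2 ^ t = u / 2 ^ t ∧ (swapLowBit u v).2 / 2 ^ t = v / 2 ^ t := by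
  induction u, v using swapLowBit.induct generalizing t with
  | case1 u => exact absurd rfl h
  | case2 u v huv hmod ih =>
    cases t with
    | zero => exact absurd (by rw [pow_zero, Nat.mod_one, Nat.mod_one]) h
    | succ s =>
      rw [pow_succ', Nat.mod_mul, Nat.mod_mul] at h
      obtain ⟨ih₁, ih₂⟩ := ih (t := s) (by omega)
      rw [swapLowBit_of_mod_eq huv hmod, two_mul_add_div_two_pow_succ _ _ (Nat.mod_lt u two_pos),
        two_mul_add_div_two_pow_succ _ _ (Nat.mod_lt v two_pos), ih₁, ih₂,
        Nat.div_div_eq_div_mul, Nat.div_div_eq_div_mul, ← pow_succ']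
      exact ⟨rfl, rfl⟩
  | case3 u v huv hmod =>
    cases t with
    | zero => exact absurd (by rw [pow_zero, Nat.mod_one, Nat.mod_one]) h
    | succ s =>
      rw [swapLowBit_of_mod_ne hmod, two_mul_add_div_two_pow_succ _ _ (Nat.mod_lt v two_pos),
        two_mul_add_div_two_pow_succ _ _ (Nat.mod_lt u two_pos), Nat.div_div_eq_div_mul,
        Nat.div_div_eq_div_mul, ← pow_succ']
      exact ⟨rfl, rfl⟩

def glue (k x : ℕ) : ℕ := if x < 2 ^ k then x else x - 2

section glue

variable {k : ℕ}

lemma glue_of_lt {x : ℕ} (hx : x < 2 ^ k) : glue k x = x := if_pos hx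

lemma glue_of_le {x : ℕ} (hx : 2 ^ k ≤ x) : glue k x = x - 2 := if_neg (by omega)

lemma glue_eq_glue_iff (hk : 1 ≤ k) {u v : ℕ} (huv : u < v) :
    glue k u = glue k v ↔ (u = 2 ^ k - 2 ∧ v = 2 ^ k) ∨ (u = 2 ^ k - 1 ∧ v = 2 ^ k + 1) := by
  have h2 : 2 ≤ 2 ^ k := Nat.le_self_pow (by omega) 2
  unfold glue
  split_ifs <;> omega

lemma image_glue_Icc (hk : 1 ≤ k) :
    glue k '' Icc 0 (2 ^ (k + 1) - 1) = Icc 0 (2 ^ (k + 1) - 3) := by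
  have h2 : 2 ≤ 2 ^ k := Nat.le_self_pow (by omega) 2
  ext x
  simp only [mem_image, mem_Icc, zero_le, true_and]
  constructor
  · rintro ⟨u, hu, rfl⟩
    unfold glue
    split_ifs <;> omega
  · intro hx
    by_cases hlow : x < 2 ^ k
    · exact ⟨x, by omega, glue_of_lt hlow⟩
    · exact ⟨x + 2, by omega, by rw [glue_of_le (by omega)]; rfl⟩

lemma image_glue_inter_Icc (hk : 1 ≤ k) {S T : Set ℕ} (hST : ∀ t < 2 ^ k, 2 ^ k + t ∈ S ↔ t ∈ T) :
    glue k '' (S ∩ Icc 0 (2 ^ (k + 1) - 1)) =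
      S ∩ Icc 0 (2 ^ k - 1) ∪ (fun x => 2 ^ k - 2 + x) '' (T ∩ Icc 0 (2 ^ k - 1)) := by
  have h2 : 2 ≤ 2 ^ k := Nat.le_self_pow (by omega) 2
  ext x
  simp only [mem_image, mem_union, mem_inter_iff, mem_Icc, zero_le, true_and]
  constructor
  · rintro ⟨u, ⟨huS, hu⟩, rfl⟩
    by_cases hlow : u < 2 ^ k
    · exact Or.inl ⟨by rwa [glue_of_lt hlow], by rw [glue_of_lt hlow]; omega⟩
    · refine Or.inr ⟨u - 2 ^ k, ⟨(hST _ (by omega)).1 ?_, by omega⟩, ?_⟩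
      · rwa [Nat.add_sub_cancel' (by omega)]
      · rw [glue_of_le (by omega)]; omega
  · rintro (⟨hxS, hx⟩ | ⟨t, ⟨htT, ht⟩, rfl⟩)
    · exact ⟨x, ⟨hxS, by omega⟩, glue_of_lt (by omega)⟩
    · refine ⟨2 ^ k + t, ⟨(hST t (by omega)).2 htT, by omega⟩, ?_⟩
      rw [glue_of_le (by omega)]
      omega

lemma image_glue_Al (hk : 1 ≤ k) :
    glue k '' Al (k + 1) = Al k ∪ (fun x => 2 ^ k - 2 + x) '' Bl k :=
  image_glue_inter_Icc hk fun _ ht => two_pow_add_mem_A_iff ht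

lemma image_glue_Bl (hk : 1 ≤ k) :
    glue k '' Bl (k + 1) = Bl k ∪ (fun x => 2 ^ k - 2 + x) '' Al k :=
  image_glue_inter_Icc hk fun _ ht => (two_pow_add_mem_A_iff ht).not_left

lemma Al_union_Bl (k : ℕ) : Al k ∪ Bl k = Icc 0 (2 ^ k - 1) := by
  rw [Al, Bl, B, ← union_inter_distrib_right, union_compl_self, univ_inter]

end glue

section odd

variable {k : ℕ}

lemma two_pow_sub_two_mem_A (hk : Odd k) : 2 ^ k - 2 ∈ A := by
  obtain ⟨m, rfl⟩ := hk
  exact (two_pow_succ_sub_two_mem_A_iff (2 * m)).2 (even_two_mul m)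

lemma two_pow_sub_one_notMem_A (hk : Odd k) : 2 ^ k - 1 ∉ A := by
  rw [two_pow_sub_one_mem_A_iff, Nat.not_even_iff_odd]
  exact hk

lemma injOn_glue (hk : Odd k) {S : Set ℕ} (hS : ∀ u ∈ S, ∀ v ∈ S, (u ∈ A ↔ v ∈ A)) :
    InjOn (glue k) S := by
  have hlt : ∀ u ∈ S, ∀ v ∈ S, u < v → glue k u ≠ glue k v := by
    intro u hu v hv huv heq
    have hA := hS u hu v hv
    rcases (glue_eq_glue_iff hk.pos huv).1 heq with ⟨rfl, rfl⟩ | ⟨rfl, rfl⟩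
    · exact two_pow_notMem_A k (hA.1 (two_pow_sub_two_mem_A hk))
    · exact two_pow_sub_one_notMem_A hk (hA.2 (two_pow_add_one_mem_A hk.pos))
  intro u hu v hv heq
  rcases lt_trichotomy u v with h | h | h
  · exact absurd heq (hlt u hu v hv h)
  · exact h
  · exact absurd heq.symm (hlt v hv u hu h)

lemma image_glue_Al_inter_image_glue_Bl (hk : Odd k) :
    glue k '' Al (k + 1) ∩ glue k '' Bl (k + 1) = {2 ^ k - 2, 2 ^ k - 1} := by
  have h2 : 2 ≤ 2 ^ k := Nat.le_self_pow (by have := hk.pos; omega) 2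
  ext x
  constructor
  · rintro ⟨⟨u, ⟨huA, -⟩, rfl⟩, ⟨v, ⟨hvB, -⟩, hvu⟩⟩
    have huv : u ≠ v := by rintro rfl; exact hvB huA
    rcases huv.lt_or_gt with h | h
    · rcases (glue_eq_glue_iff hk.pos h).1 hvu.symm with ⟨rfl, -⟩ | ⟨rfl, -⟩
      · exact Or.inl (glue_of_lt (by omega))
      · exact Or.inr (glue_of_lt (by omega))
    · rcases (glue_eq_glue_iff hk.pos h).1 hvu with ⟨-, rfl⟩ | ⟨-, rfl⟩
      · exact Or.inl (glue_of_le le_rfl)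
      · refine Or.inr (show glue k (2 ^ k + 1) = 2 ^ k - 1 from ?_)
        rw [glue_of_le (Nat.le_add_right _ 1)]
        omega
  · rintro (rfl | rfl)
    · exact ⟨⟨2 ^ k - 2, ⟨two_pow_sub_two_mem_A hk, by simp; omega⟩, glue_of_lt (by omega)⟩,
        ⟨2 ^ k, ⟨two_pow_notMem_A k, by simp; omega⟩, glue_of_le le_rfl⟩⟩
    · refine ⟨⟨2 ^ k + 1, ⟨two_pow_add_one_mem_A hk.pos, by simp; omega⟩, ?_⟩,
        ⟨2 ^ k - 1, ⟨two_pow_sub_one_notMem_A hk, by simp; omega⟩, glue_of_lt (by omega)⟩⟩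
      rw [glue_of_le (by omega)]
      omega

end odd

def sumPairs {α : Type*} (f : α → ℕ) (S : Set α) (n : ℕ) : Set (α × α) :=
  {p | p.1 ∈ S ∧ p.2 ∈ S ∧ p.1 ≠ p.2 ∧ f p.1 + f p.2 = n}

lemma two_mul_R (S : Set ℕ) (n : ℕ) : 2 * R S n = (sumPairs id S n).ncard := by
  set P := {p : ℕ × ℕ | p.1 ∈ S ∧ p.2 ∈ S ∧ p.1 < p.2 ∧ p.1 + p.2 = n}
  have hP : P.Finite := (finite_Iic n).prod (finite_Iic n) |>.subset fun p hp => by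
    simp only [mem_prod, mem_Iic]; have := hp.2.2.2; omega
  have hsplit : sumPairs id S n = P ∪ Prod.swap '' P := by
    ext ⟨a, b⟩
    simp only [sumPairs, P, mem_union, image_swap_eq_preimage_swap, mem_preimage, Prod.swap_prod_mk,
      mem_ofPred_eq, id]
    constructor
    · rintro ⟨ha, hb, hab, hsum⟩
      rcases hab.lt_or_gt with h | h
      · exact Or.inl ⟨ha, hb, h, hsum⟩
      · exact Or.inr ⟨hb, ha, h, by omega⟩
    · rintro (⟨ha, hb, h, hsum⟩ | ⟨hb, ha, h, hsum⟩)
      · exact ⟨ha, hb, h.ne, hsum⟩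
      · exact ⟨ha, hb, h.ne', by omega⟩
  have hdisj : Disjoint P (Prod.swap '' P) := by
    rw [disjoint_left]
    rintro ⟨a, b⟩ h₁ ⟨⟨c, d⟩, h₂, heq⟩
    simp only [Prod.swap_prod_mk, Prod.mk.injEq] at heq
    obtain ⟨rfl, rfl⟩ := heq
    exact absurd h₁.2.2.1 (not_lt.2 h₂.2.2.1.le)
  rw [hsplit, ncard_union_eq hdisj hP (hP.image _), ncard_image_of_injective _ Prod.swap_injective,
    R, two_mul]

lemma ncard_sumPairs_id_image {α : Type*} {f : α → ℕ} {S : Set α} (hf : InjOn f S) (n : ℕ) :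
    (sumPairs id (f '' S) n).ncard = (sumPairs f S n).ncard := by
  have himage : sumPairs id (f '' S) n = Prod.map f f '' sumPairs f S n := by
    ext ⟨x, y⟩
    constructor
    · rintro ⟨⟨a, ha, rfl⟩, ⟨b, hb, rfl⟩, hab, hsum⟩
      exact ⟨(a, b), ⟨ha, hb, fun h => hab (congrArg f h), hsum⟩, rfl⟩
    · rintro ⟨⟨a, b⟩, ⟨ha, hb, hab, hsum⟩, heq⟩
      simp only [Prod.map, Prod.mk.injEq] at heq
      obtain ⟨rfl, rfl⟩ := heq
      exact ⟨mem_image_of_mem f ha, mem_image_of_mem f hb, fun h => hab (hf ha hb h), hsum⟩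
  rw [himage, InjOn.ncard_image]
  rintro ⟨a, b⟩ ⟨ha, hb, -⟩ ⟨c, d⟩ ⟨hc, hd, -⟩ heq
  simp only [Prod.map, Prod.mk.injEq] at heq
  rw [show a = c from hf ha hc heq.1, show b = d from hf hb hd heq.2]

lemma swapLowBit_mem_sumPairs_glue {k n u v : ℕ} {X Y : Set ℕ}
    (hp : (u, v) ∈ sumPairs (glue k) (X ∩ Icc 0 (2 ^ (k + 1) - 1)) n) (hA : u ∈ A ↔ v ∈ A)
    (hY : (swapLowBit u v).1 ∈ Y ∧ (swapLowBit u v).2 ∈ Y) :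
    swapLowBit u v ∈ sumPairs (glue k) (Y ∩ Icc 0 (2 ^ (k + 1) - 1)) n := by
  simp only [sumPairs, mem_ofPred_eq, mem_inter_iff, mem_Icc, zero_le, true_and] at hp ⊢
  obtain ⟨⟨-, hu⟩, ⟨-, hv⟩, huv, hsum⟩ := hp
  have hk := Nat.two_pow_pos k
  -- `swapLowBit` changes a digit below `k` only, so it keeps each entry in its half
  obtain ⟨hdiv₁, hdiv₂⟩ :=
    swapLowBit_div_two_pow (mod_two_pow_ne_of_mem_A_iff (k := k) (by omega) (by omega) huv hA)
  have hhalf : ∀ {x y : ℕ}, x / 2 ^ k = y / 2 ^ k → ∀ c, (x < c * 2 ^ k ↔ y < c * 2 ^ k) :=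
    fun h c => by rw [← Nat.div_lt_iff_lt_mul hk, h, Nat.div_lt_iff_lt_mul hk]
  have h₁ := hhalf hdiv₁ 1
  have h₂ := hhalf hdiv₂ 1
  have h₃ := hhalf hdiv₁ 2
  have h₄ := hhalf hdiv₂ 2
  have hadd := swapLowBit_add u v
  refine ⟨⟨hY.1, by omega⟩, ⟨hY.2, by omega⟩, swapLowBit_fst_ne_snd huv, ?_⟩
  unfold glue at hsum ⊢
  split_ifs at hsum ⊢ <;> omega

lemma bijOn_swapLowBit_sumPairs_glue (k n : ℕ) :
    BijOn (fun p => swapLowBit p.1 p.2) (sumPairs (glue k) (Al (k + 1)) n)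
      (sumPairs (glue k) (Bl (k + 1)) n) := by
  refine InvOn.bijOn ⟨fun p hp => swapLowBit_swapLowBit hp.2.2.1,
    fun p hp => swapLowBit_swapLowBit hp.2.2.1⟩ ?_ ?_
  · rintro ⟨u, v⟩ hp
    have hflip := swapLowBit_mem_A_iff hp.2.2.1
    exact swapLowBit_mem_sumPairs_glue hp (iff_of_true hp.1.1 hp.2.1.1)
      ⟨fun h => hflip.1.1 h hp.1.1, fun h => hflip.2.1 h hp.2.1.1⟩
  · rintro ⟨u, v⟩ hp
    have hflip := swapLowBit_mem_A_iff hp.2.2.1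
    exact swapLowBit_mem_sumPairs_glue hp (iff_of_false hp.1.1 hp.2.1.1)
      ⟨hflip.1.2 hp.1.1, hflip.2.2 hp.2.1.1⟩

lemma R_image_glue_Al_eq_R_image_glue_Bl {k : ℕ} (hk : Odd k) (n : ℕ) :
    R (glue k '' Al (k + 1)) n = R (glue k '' Bl (k + 1)) n := by
  have h := (bijOn_swapLowBit_sumPairs_glue k n).ncard_eq
  rw [← ncard_sumPairs_id_image (injOn_glue hk fun _ hu _ hv => iff_of_true hu.1 hv.1),
    ← ncard_sumPairs_id_image (injOn_glue hk fun _ hu _ hv => iff_of_false hu.1 hv.1),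
    ← two_mul_R, ← two_mul_R] at h
  omega

theorem stmt7_general (l : ℕ)
    (C D : Set ℕ)
    (hC : C = Al (2 * l + 1) ∪ ((fun x => 2 ^ (2 * l + 1) - 2 + x) '' Bl (2 * l + 1)))
    (hD : D = Bl (2 * l + 1) ∪ ((fun x => 2 ^ (2 * l + 1) - 2 + x) '' Al (2 * l + 1))) :
    C ∪ D = Set.Icc 0 (2 ^ (2 * l + 2) - 3) ∧
    C ∩ D = {2 ^ (2 * l + 1) - 2, 2 ^ (2 * l + 1) - 1} ∧
    (0 : ℕ) ∈ C ∧
    ∀ n : ℕ, R C n = R D n := by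
  have hk : Odd (2 * l + 1) := odd_two_mul_add_one l
  rw [← image_glue_Al hk.pos] at hC
  rw [← image_glue_Bl hk.pos] at hD
  subst hC hD
  refine ⟨?_, image_glue_Al_inter_image_glue_Bl hk,
    ⟨0, ⟨zero_mem_A, by simp⟩, glue_of_lt (Nat.two_pow_pos _)⟩,
    R_image_glue_Al_eq_R_image_glue_Bl hk⟩
  rw [← image_union, Al_union_Bl, image_glue_Icc hk.pos]

theorem stmt7 (l : ℕ) (hl : 0 < l)
    (C D : Set ℕ)
    (hC : C = Al (2 * l + 1) ∪ ((fun x => 2 ^ (2 * l + 1) - 2 + x) '' Bl (2 * l + 1)))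
    (hD : D = Bl (2 * l + 1) ∪ ((fun x => 2 ^ (2 * l + 1) - 2 + x) '' Al (2 * l + 1))) :
    C ∪ D = Set.Icc 0 (2 ^ (2 * l + 2) - 3) ∧
    C ∩ D = {2 ^ (2 * l + 1) - 2, 2 ^ (2 * l + 1) - 1} ∧
    (0 : ℕ) ∈ C ∧
    ∀ n : ℕ, R C n = R D n :=
  stmt7_general l C D hC hD
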